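/- arXiv:2402.11475 — 2 statements merged into one kernel-verified Lean document; each statement's English description precedes it below -/
import Mathlib

section
/- Let H and K be cancellative semigroups, at least one of which is commutative. Then the semigroup P_fin(H) of nonempty finite subsets of H under setwise multiplication is isomorphic to the semigroup P_fin(K) of nonempty finite subsets of K if and only if H is isomorphic to K. -/
open Pointwise

/-- The finitary power semigroup of `S`: nonempty finite subsets under setwise
multiplication. -/
noncomputable instance finitaryPowerSemigroup (S : Type*) [Semigroup S] :
    Semigroup {X : Set S // X.Finite ∧ X.Nonempty} where
  mul X Y := ⟨X.1 * Y.1, X.2.1.mul Y.2.1, X.2.2.mul Y.2.2⟩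
  mul_assoc X Y Z := Subtype.ext (mul_assoc X.1 Y.1 Z.1)

/-!
For a commutative left-cancellative semigroup `S`, the singletons are exactly the left-cancellable
elements of `P_fin(S)`: if `X` contains `a ≠ b`, then `X * X²` and `X * (X² \ {a * b})` agree,
because `x * (a * b)` equals `b * (a * a)` when `x = a` and `a * (x * b)` otherwise. An isomorphism
`P_fin(H) ≃* P_fin(K)` transports commutativity from one side to the other and preserves
left-cancellability, so it restricts to an isomorphism between the copies of `H` and `K` formed
by the singletons.
-/

abbrev FinitaryPower (S : Type*) [Semigroup S] := {X : Set S // X.Finite ∧ X.Nonempty}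

theorem MulEquiv.isLeftRegular_apply_iff {M N : Type*} [Mul M] [Mul N] (e : M ≃* N) {a : M} :
    IsLeftRegular (e a) ↔ IsLeftRegular a := by
  have h : (e a * ·) = e ∘ (a * ·) ∘ e.symm := funext fun y => by simp
  rw [IsLeftRegular, IsLeftRegular, h, EquivLike.comp_injective, ← Function.comp_def,
    EquivLike.injective_comp]

theorem Set.mul_comm_of_forall {S : Type*} [Mul S] (hc : ∀ a b : S, a * b = b * a)
    (X Y : Set S) : X * Y = Y * X := by
  change Set.image2 _ X Y = Set.image2 _ Y X
  rw [Set.image2_swap]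
  simp_rw [hc]

theorem Set.mul_mul_self_sdiff_singleton_mul {S : Type*} [Semigroup S] [IsLeftCancelMul S]
    (hc : ∀ a b : S, a * b = b * a) {X : Set S} {a b : S} (ha : a ∈ X) (hb : b ∈ X)
    (hab : a ≠ b) : X * ((X * X) \ {a * b}) = X * (X * X) := by
  refine (Set.mul_subset_mul_left Set.sdiff_subset).antisymm ?_
  rintro _ ⟨x, hx, _, ⟨y, hy, z, hz, rfl⟩, rfl⟩
  beta_reduce
  by_cases hyz : y * z = a * b
  · rw [hyz]
    by_cases hxa : x = a
    · have haa : a * a ≠ a * b := fun h => hab (mul_left_cancel h)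
      refine ⟨b, hb, a * a, ⟨Set.mul_mem_mul ha ha, haa⟩, ?_⟩
      show b * (a * a) = x * (a * b)
      rw [hxa, hc b, ← mul_assoc]
    · have hxb : x * b ≠ a * b := fun h => hxa (mul_left_cancel (by rwa [hc b, hc b]))
      refine ⟨a, ha, x * b, ⟨Set.mul_mem_mul hx hb, hxb⟩, ?_⟩
      show a * (x * b) = x * (a * b)
      rw [← mul_assoc, hc a x, mul_assoc]
  · exact Set.mul_mem_mul hx ⟨Set.mul_mem_mul hy hz, hyz⟩

namespace FinitaryPower

variable {S H K : Type*} [Semigroup S] [Semigroup H] [Semigroup K]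

variable (S) in
def singletonHom : S →ₙ* FinitaryPower S where
  toFun a := ⟨{a}, Set.finite_singleton a, Set.singleton_nonempty a⟩
  map_mul' _ _ := Subtype.ext Set.singleton_mul_singleton.symm

theorem singletonHom_injective : Function.Injective (singletonHom S) :=
  fun _ _ h => Set.singleton_injective (congrArg Subtype.val h)

theorem mul_comm_of_forall (hc : ∀ a b : S, a * b = b * a) (X Y : FinitaryPower S) :
    X * Y = Y * X :=
  Subtype.ext (Set.mul_comm_of_forall hc X.1 Y.1)

theorem forall_mul_comm_of_mulEquiv (φ : FinitaryPower H ≃* FinitaryPower K)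
    (hK : ∀ a b : K, a * b = b * a) (a b : H) : a * b = b * a :=
  singletonHom_injective <| φ.injective <| by
    rw [map_mul, map_mul, map_mul, map_mul, mul_comm_of_forall hK]

theorem isLeftRegular_singletonHom [IsLeftCancelMul S] (a : S) :
    IsLeftRegular (singletonHom S a) := by
  intro Y Z h
  have h' : {a} * Y.1 = {a} * Z.1 := congrArg Subtype.val h
  rw [Set.singleton_mul, Set.singleton_mul] at h'
  exact Subtype.ext (Set.image_injective.mpr (mul_right_injective a) h')

theorem subsingleton_of_isLeftRegular [IsLeftCancelMul S] (hc : ∀ a b : S, a * b = b * a)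
    {X : FinitaryPower S} (hX : IsLeftRegular X) : X.1.Subsingleton := by
  intro a ha b hb
  by_contra hab
  have haa : a * a ∈ (X.1 * X.1) \ {a * b} :=
    ⟨Set.mul_mem_mul ha ha, fun h => hab (mul_left_cancel h)⟩
  let Z : FinitaryPower S := ⟨(X.1 * X.1) \ {a * b}, (X.2.1.mul X.2.1).sdiff, a * a, haa⟩
  have hZ : X * (X * X) = X * Z :=
    Subtype.ext (Set.mul_mul_self_sdiff_singleton_mul hc ha hb hab).symm
  have hab_mem : a * b ∈ (X * X).1 := Set.mul_mem_mul ha hb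
  rw [hX hZ] at hab_mem
  exact hab_mem.2 rfl

theorem range_singletonHom [IsLeftCancelMul S] (hc : ∀ a b : S, a * b = b * a) :
    Set.range (singletonHom S) = {X | IsLeftRegular X} := by
  refine (Set.range_subset_iff.mpr isLeftRegular_singletonHom).antisymm fun X hX => ?_
  obtain ⟨a, ha⟩ := X.2.2
  exact ⟨a, Subtype.ext ((subsingleton_of_isLeftRegular hc hX).eq_singleton_of_mem ha).symm⟩

variable (S) in
noncomputable def singletonEquiv :
    S ≃* (singletonHom S).srange :=
  MulEquiv.ofBijective (singletonHom S).srangeRestrict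
    ⟨fun _ _ h => singletonHom_injective (congrArg Subtype.val h),
      MulHom.srangeRestrict_surjective _⟩

theorem map_srange_singletonHom [IsLeftCancelMul H] [IsLeftCancelMul K]
    (hH : ∀ a b : H, a * b = b * a) (hK : ∀ a b : K, a * b = b * a)
    (φ : FinitaryPower H ≃* FinitaryPower K) :
    (singletonHom H).srange.map (φ : FinitaryPower H →ₙ* FinitaryPower K) =
      (singletonHom K).srange := by
  refine SetLike.coe_injective ?_
  rw [Subsemigroup.coe_map, MulHom.coe_srange, MulHom.coe_srange, range_singletonHom hH,
    range_singletonHom hK]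
  ext Y
  simp only [Set.mem_image, Set.mem_ofPred_eq]
  refine ⟨?_, fun hY => ⟨φ.symm Y, ?_, φ.apply_symm_apply Y⟩⟩
  · rintro ⟨X, hX, rfl⟩
    exact (φ.isLeftRegular_apply_iff).mpr hX
  · rwa [← φ.isLeftRegular_apply_iff, φ.apply_symm_apply]

noncomputable def mulEquivOfMulEquiv [IsLeftCancelMul H] [IsLeftCancelMul K]
    (hH : ∀ a b : H, a * b = b * a) (hK : ∀ a b : K, a * b = b * a)
    (φ : FinitaryPower H ≃* FinitaryPower K) : H ≃* K :=
  (singletonEquiv H).trans <| (φ.subsemigroupMap _).trans <|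
    (MulEquiv.subsemigroupCongr (map_srange_singletonHom hH hK φ)).trans (singletonEquiv K).symm

def congr (e : H ≃* K) : FinitaryPower H ≃* FinitaryPower K where
  toFun X := ⟨e '' X.1, X.2.1.image e, X.2.2.image e⟩
  invFun X := ⟨e.symm '' X.1, X.2.1.image _, X.2.2.image _⟩
  left_inv X := Subtype.ext (e.toEquiv.symm_image_image X.1)
  right_inv X := Subtype.ext (e.toEquiv.image_symm_image X.1)
  map_mul' _ _ := Subtype.ext (Set.image_mul (e : H →ₙ* K))

end FinitaryPower

/-- Let `H` and `K` be cancellative semigroups, at least one of which is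
commutative. Then the semigroup of nonempty finite subsets of `H` under setwise
multiplication is isomorphic to that of `K` if and only if `H` is isomorphic to `K`. -/
theorem finitary_power_isomorphic_iff_isomorphic {H K : Type*} [Semigroup H] [Semigroup K]
    [IsCancelMul H] [IsCancelMul K]
    (hcomm : (∀ a b : H, a * b = b * a) ∨ (∀ a b : K, a * b = b * a)) :
    Nonempty ({X : Set H // X.Finite ∧ X.Nonempty} ≃*
        {X : Set K // X.Finite ∧ X.Nonempty}) ↔
      Nonempty (H ≃* K) := by
  refine ⟨fun ⟨φ⟩ => ?_, fun ⟨e⟩ => ⟨FinitaryPower.congr e⟩⟩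
  obtain ⟨hH, hK⟩ : (∀ a b : H, a * b = b * a) ∧ (∀ a b : K, a * b = b * a) :=
    hcomm.elim (fun hH => ⟨hH, FinitaryPower.forall_mul_comm_of_mulEquiv φ.symm hH⟩)
      (fun hK => ⟨FinitaryPower.forall_mul_comm_of_mulEquiv φ hK, hK⟩)
  exact ⟨FinitaryPower.mulEquivOfMulEquiv hH hK φ⟩
end

section
/- Let H and K be semigroups with H commutative, let P be a downward complete subsemigroup of P(H) and Q a downward complete subsemigroup of P(K), and suppose there is a semigroup isomorphism from P to Q. Then K is commutative. -/
open Pointwise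

/-- A subsemigroup of the large power semigroup of `S` (presented as a family of nonempty
subsets of `S` closed under setwise multiplication) is *downward complete* if every element
of `S` lies in at least one member and every nonempty subset of a member is itself a member. -/
def DownwardComplete {S : Type*} [Semigroup S] (P : Set (Set S)) : Prop :=
  (∀ X ∈ P, X.Nonempty) ∧
  (∀ X ∈ P, ∀ Y ∈ P, X * Y ∈ P) ∧
  (∀ s : S, ∃ X ∈ P, s ∈ X) ∧
  (∀ X ∈ P, ∀ Y : Set S, Y.Nonempty → Y ⊆ X → Y ∈ P)

theorem Set.mul_comm_of_forall_mul_comm {S : Type*} [Mul S] (h : ∀ a b : S, a * b = b * a)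
    (X Y : Set S) : X * Y = Y * X := by
  simp only [← Set.image2_mul, Set.image2_swap (· * ·) X Y, h]

theorem mul_comm_on_of_surj_of_map_mul {α β : Type*} [Mul α] [Mul β] {P : Set α} {Q : Set β}
    (hcomm : ∀ x ∈ P, ∀ y ∈ P, x * y = y * x) (f : α → β)
    (hsurj : ∀ y ∈ Q, ∃ x ∈ P, f x = y)
    (hmul : ∀ x ∈ P, ∀ y ∈ P, f (x * y) = f x * f y) :
    ∀ y ∈ Q, ∀ z ∈ Q, y * z = z * y := by
  intro y hy z hz
  obtain ⟨x, hx, rfl⟩ := hsurj y hy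
  obtain ⟨x', hx', rfl⟩ := hsurj z hz
  rw [← hmul x hx x' hx', ← hmul x' hx' x hx, hcomm x hx x' hx']

theorem DownwardComplete.singleton_mem {S : Type*} [Semigroup S] {P : Set (Set S)}
    (hP : DownwardComplete P) (s : S) : {s} ∈ P := by
  obtain ⟨X, hX, hs⟩ := hP.2.2.1 s
  exact hP.2.2.2 X hX {s} (Set.singleton_nonempty s) (Set.singleton_subset_iff.mpr hs)

theorem comm_of_iso_downwardComplete_general {H K : Type*} [Semigroup H] [Semigroup K]
    (hcommH : ∀ a b : H, a * b = b * a)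
    (P : Set (Set H)) (Q : Set (Set K))
    (hQ : DownwardComplete Q)
    (f : Set H → Set K)
    (hsurj : ∀ Y ∈ Q, ∃ X ∈ P, f X = Y)
    (hmul : ∀ X ∈ P, ∀ Y ∈ P, f (X * Y) = f X * f Y) :
    ∀ a b : K, a * b = b * a := by
  intro a b
  have hQcomm : ∀ Y ∈ Q, ∀ Z ∈ Q, Y * Z = Z * Y :=
    mul_comm_on_of_surj_of_map_mul (fun X _ Y _ => Set.mul_comm_of_forall_mul_comm hcommH X Y)
      f hsurj hmul
  have hab := hQcomm {a} (hQ.singleton_mem a) {b} (hQ.singleton_mem b)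
  rwa [Set.singleton_mul_singleton, Set.singleton_mul_singleton,
    Set.singleton_eq_singleton_iff] at hab

/-- Let `H` and `K` be semigroups with `H` commutative, `P` a downward
complete subsemigroup of `𝒫(H)` and `Q` a downward complete subsemigroup of `𝒫(K)`.
If there is a semigroup isomorphism from `P` to `Q` (a bijection of `P` onto `Q` respecting
setwise multiplication), then `K` is commutative. -/
theorem comm_of_iso_downwardComplete {H K : Type*} [Semigroup H] [Semigroup K]
    (hcommH : ∀ a b : H, a * b = b * a)
    (P : Set (Set H)) (Q : Set (Set K))
    (hP : DownwardComplete P) (hQ : DownwardComplete Q)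
    (f : Set H → Set K)
    (hmaps : ∀ X ∈ P, f X ∈ Q)
    (hinj : Set.InjOn f P)
    (hsurj : ∀ Y ∈ Q, ∃ X ∈ P, f X = Y)
    (hmul : ∀ X ∈ P, ∀ Y ∈ P, f (X * Y) = f X * f Y) :
    ∀ a b : K, a * b = b * a :=
  comm_of_iso_downwardComplete_general hcommH P Q hQ f hsurj hmul
end
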